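/- Let σ and τ be permutations. Then ∂σ = ∂τ if and only if one of the following holds: {σ, τ} = {12, 21}; or {σ, τ} ⊆ {132, 213, 231, 312}; or {σ, τ} = {2413, 3142}; or σ = τ. -/

import Mathlib

/-!
Deleting the entry `v` of a permutation `s` and standardizing gives a card of `s`; the shadow
of `s` is the set of its cards, so two permutations have the same shadow iff they have the
same deck. Lengths at most four are a finite computation. If a rule picks an entry of every
permutation compatibly with deleting the other entries (the maximum, the first or the last
entry), the deck of the card obtained by deleting the picked entry is determined by the deck
of `s`. So, by induction on the length, permutations of length `n ≥ 5` with the same deck have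
the same three picked cards; at `n = 5` these might be `2413` and `3142`, which a finite check
rules out. Finally the three cards determine `s` once `n ≥ 3`: if `s ≠ t`, they force `s = n ρ`
and `t = ρ n`, and then the first and the last entry of `ρ` would both equal `n - 1`.
-/

/-- A permutation of length `n ≥ 1` in one-line notation: a nonempty list of
natural numbers that is a rearrangement of `1, …, n` where `n` is its length. -/
def IsPermList (l : List ℕ) : Prop := l ≠ [] ∧ l.Perm (List.range' 1 l.length)

instance (l : List ℕ) : Decidable (IsPermList l) :=
  inferInstanceAs (Decidable (l ≠ [] ∧ l.Perm (List.range' 1 l.length)))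

/-- The type of all (finite, nonempty) permutations. -/
abbrev Permu := {l : List ℕ // IsPermList l}

/-- Helper to construct explicit permutations. -/
def p (l : List ℕ) (h : IsPermList l := by decide) : Permu := ⟨l, h⟩

/-- Pattern containment: `σ` is contained in `τ` when some (not necessarily
contiguous) subsequence of `τ` is order isomorphic to `σ`. -/
def Contains (σ τ : Permu) : Prop :=
  ∃ u : List ℕ, u.Sublist τ.val ∧ u.length = σ.val.length ∧
    ∀ i j : ℕ, i < u.length → j < u.length →
      (u.getD i 0 < u.getD j 0 ↔ σ.val.getD i 0 < σ.val.getD j 0)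

/-- A pattern class: a set of permutations closed downwards under containment. -/
def IsPatternClass (A : Set Permu) : Prop :=
  ∀ σ τ : Permu, τ ∈ A → Contains σ τ → σ ∈ A

/-- `Av B` is the set of permutations containing no member of the set `B`. -/
def Av (B : Set Permu) : Set Permu := {π | ∀ β ∈ B, ¬ Contains β π}

/-- An isomorphism of pattern classes is a bijection which preserves and
reflects containment. -/
def IsIso {A B : Set Permu} (f : ↥A → ↥B) : Prop :=
  Function.Bijective f ∧
  ∀ σ τ : ↥A, Contains σ.val τ.val ↔ Contains (f σ).val (f τ).val

/-- The shadow of `τ`: the permutations of length one less that are contained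
in `τ`. -/
def shadow (τ : Permu) : Set Permu :=
  {σ : Permu | σ.val.length + 1 = τ.val.length ∧ Contains σ τ}

namespace List

variable {α : Type*} {s t u : List α} {a v d : α}

lemma headD_mem (h : s ≠ []) : s.headD d ∈ s := by
  obtain ⟨a, s, rfl⟩ := exists_cons_of_ne_nil h
  exact mem_cons_self

lemma getLastD_mem (h : s ≠ []) : s.getLastD d ∈ s := by
  obtain ⟨a, s, rfl⟩ := exists_cons_of_ne_nil h
  rw [getLastD_cons]
  exact getLastD_mem_cons

lemma exists_eq_concat_of_ne_nil (h : s ≠ []) : ∃ s' a, s = s' ++ [a] :=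
  ⟨s.dropLast, s.getLast h, (dropLast_concat_getLast h).symm⟩

lemma headD_ne_getLastD (hs : s.Nodup) (h : 2 ≤ s.length) : s.headD d ≠ s.getLastD d := by
  rcases s with _ | ⟨a, _ | ⟨b, s⟩⟩
  · simp at h
  · simp at h
  rw [nodup_cons] at hs
  simp only [headD_cons, getLastD_eq_getLast?, getLast?_cons_cons]
  rw [getLast?_eq_some_getLast (cons_ne_nil b s), Option.getD_some]
  exact fun heq => hs.1 (heq ▸ getLast_mem _)

lemma countP_eq_countP_range (s : List α) (d : α) (p : α → Bool) :
    s.countP p = (range s.length).countP (fun j => p (s.getD j d)) := by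
  have : (range s.length).map (s.getD · d) = s := ext_getElem (by simp) fun i _ h => by simp [h]
  conv_lhs => rw [← this]
  rw [countP_map]
  rfl

lemma countP_le_range'_one (x n : ℕ) : (range' 1 n).countP (· ≤ x) = min x n := by
  induction n with
  | zero => simp
  | succ n ih =>
    rw [range'_concat, countP_append, ih]
    simp only [countP_singleton, decide_eq_true_eq]
    split_ifs <;> omega

variable [DecidableEq α]

lemma erase_concat_of_ne (h : v ≠ a) : (s ++ [a]).erase v = s.erase v ++ [a] := by
  by_cases hv : v ∈ s <;> simp [erase_append, Ne.symm h, hv, erase_of_not_mem]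

lemma cons_headD_erase (h : s ≠ []) : s.headD d :: s.erase (s.headD d) = s := by
  obtain ⟨a, s, rfl⟩ := exists_cons_of_ne_nil h
  simp

lemma concat_getLastD_erase (hs : s.Nodup) (h : s ≠ []) :
    s.erase (s.getLastD d) ++ [s.getLastD d] = s := by
  obtain ⟨s, a, rfl⟩ := exists_eq_concat_of_ne_nil h
  have ha : a ∉ s := fun has => by
    simp only [nodup_append, nodup_cons] at hs
    exact hs.2.2 a has a (mem_singleton_self a) rfl
  simp [erase_append, ha]

lemma headD_erase_of_ne (h : s.headD d ≠ v) : (s.erase v).headD d = s.headD d := by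
  cases s with
  | nil => rfl
  | cons a s =>
    rw [headD_cons] at h
    simp [h]

lemma getLastD_erase_of_ne (h : s.getLastD d ≠ v) : (s.erase v).getLastD d = s.getLastD d := by
  rcases eq_nil_or_concat s with rfl | ⟨s, a, rfl⟩
  · rfl
  simp only [concat_eq_append, getLastD_concat] at h ⊢
  rw [erase_concat_of_ne (Ne.symm h), getLastD_concat]

lemma headD_eq_or_of_erase_eq (h : s.erase v = t.erase v) (hne : s.headD d ≠ t.headD d) :
    s.headD d = v ∨ t.headD d = v := by
  by_contra! hv
  exact hne (by rw [← headD_erase_of_ne hv.1, ← headD_erase_of_ne hv.2, h])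

lemma getLastD_eq_or_of_erase_eq (h : s.erase v = t.erase v)
    (hne : s.getLastD d ≠ t.getLastD d) : s.getLastD d = v ∨ t.getLastD d = v := by
  by_contra! hv
  exact hne (by rw [← getLastD_erase_of_ne hv.1, ← getLastD_erase_of_ne hv.2, h])

lemma insertIdx_erase_idxOf (hv : v ∈ s) : (s.erase v).insertIdx (s.idxOf v) v = s := by
  have hi := idxOf_lt_length_iff.2 hv
  calc (s.erase v).insertIdx (s.idxOf v) v
      = (s.eraseIdx (s.idxOf v)).insertIdx (s.idxOf v) s[s.idxOf v] := by
        rw [erase_eq_eraseIdx_of_idxOf rfl, getElem_idxOf hi]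
    _ = s := insertIdx_eraseIdx_getElem hi

lemma exists_eq_erase_of_sublist (hu : u.Sublist s) (hs : s.Nodup)
    (hlen : u.length + 1 = s.length) : ∃ v ∈ s, u = s.erase v := by
  obtain ⟨v, hvs, hvu⟩ : ∃ v ∈ s, v ∉ u := by
    by_contra! h
    have := (hs.subperm h).length_le
    omega
  refine ⟨v, hvs, (erase_of_not_mem hvu ▸ hu.erase v).eq_of_length ?_⟩
  rw [length_erase_of_mem hvs]
  omega

end List

namespace Shadow

def shiftDown (v x : ℕ) : ℕ := if v < x then x - 1 else x

def shiftUp (v x : ℕ) : ℕ := if v ≤ x then x + 1 else x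

lemma shiftDown_of_lt {v x : ℕ} (h : x < v) : shiftDown v x = x := if_neg (by omega)

lemma shiftDown_of_gt {v x : ℕ} (h : v < x) : shiftDown v x = x - 1 := if_pos h

lemma shiftUp_shiftDown {v x : ℕ} (h : x ≠ v) : shiftUp v (shiftDown v x) = x := by
  unfold shiftDown shiftUp; split_ifs <;> omega

lemma shiftDown_lt_shiftDown_iff {v x y : ℕ} (hx : x ≠ v) (hy : y ≠ v) :
    shiftDown v x < shiftDown v y ↔ x < y := by
  unfold shiftDown; split_ifs <;> omega

lemma eq_of_shiftDown_eq {v x y : ℕ} (hx : x ≠ v) (hy : y ≠ v)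
    (h : shiftDown v x = shiftDown v y) : x = y := by
  unfold shiftDown at h; split_ifs at h <;> omega

lemma shiftDown_shiftDown_comm (a b x : ℕ) :
    shiftDown (shiftDown a b) (shiftDown a x) = shiftDown (shiftDown b a) (shiftDown b x) := by
  unfold shiftDown; split_ifs <;> omega

def deleteVal (s : List ℕ) (v : ℕ) : List ℕ := (s.erase v).map (shiftDown v)

section deleteVal

variable {s t : List ℕ} {a v : ℕ}

lemma length_deleteVal (hv : v ∈ s) : (deleteVal s v).length = s.length - 1 := by
  rw [deleteVal, List.length_map, List.length_erase_of_mem hv]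

lemma deleteVal_eq_filter_map (hs : s.Nodup) :
    deleteVal s v = (s.filter (· != v)).map (shiftDown v) := by
  rw [deleteVal, hs.erase_eq_filter]

lemma mem_deleteVal (hs : s.Nodup) {w : ℕ} :
    w ∈ deleteVal s v ↔ ∃ x ∈ s, x ≠ v ∧ shiftDown v x = w := by
  simp [deleteVal_eq_filter_map hs, and_assoc]

lemma nodup_deleteVal (hs : s.Nodup) : (deleteVal s v).Nodup := by
  rw [deleteVal_eq_filter_map hs]
  refine (hs.filter _).map_on fun x hx y hy => eq_of_shiftDown_eq ?_ ?_ <;> simp_all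

lemma map_shiftUp_deleteVal (hs : s.Nodup) : (deleteVal s v).map (shiftUp v) = s.erase v := by
  rw [deleteVal, List.map_map]
  conv_rhs => rw [← List.map_id (s.erase v)]
  exact List.map_congr_left fun x hx => shiftUp_shiftDown (hs.mem_erase_iff.1 hx).1

lemma erase_eq_of_deleteVal_eq (hs : s.Nodup) (ht : t.Nodup)
    (h : deleteVal s v = deleteVal t v) : s.erase v = t.erase v := by
  rw [← map_shiftUp_deleteVal hs, ← map_shiftUp_deleteVal ht, h]

lemma deleteVal_comm (hs : s.Nodup) (a b : ℕ) :
    deleteVal (deleteVal s a) (shiftDown a b) = deleteVal (deleteVal s b) (shiftDown b a) := by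
  rcases eq_or_ne a b with rfl | hab
  · rfl
  rw [deleteVal_eq_filter_map (nodup_deleteVal hs), deleteVal_eq_filter_map (nodup_deleteVal hs),
    deleteVal_eq_filter_map hs, deleteVal_eq_filter_map hs]
  simp only [List.filter_map, List.map_map, List.filter_filter]
  congr 1
  · exact funext (shiftDown_shiftDown_comm a b)
  · refine List.filter_congr fun x _ => ?_
    rw [Bool.eq_iff_iff]
    simp only [Function.comp_apply, Bool.and_eq_true, bne_iff_ne, ne_eq]
    unfold shiftDown
    split_ifs <;> omega

lemma deleteVal_cons_self : deleteVal (a :: s) a = s.map (shiftDown a) := by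
  rw [deleteVal, List.erase_cons_head]

lemma deleteVal_cons_of_ne (h : v ≠ a) :
    deleteVal (a :: s) v = shiftDown v a :: deleteVal s v := by
  simp [deleteVal, Ne.symm h]

lemma deleteVal_concat_self (h : a ∉ s) : deleteVal (s ++ [a]) a = s.map (shiftDown a) := by
  simp [deleteVal, List.erase_append, h]

lemma deleteVal_concat_of_ne (h : v ≠ a) :
    deleteVal (s ++ [a]) v = deleteVal s v ++ [shiftDown v a] := by
  rw [deleteVal, List.erase_concat_of_ne h, List.map_append]
  rfl

end deleteVal

def IsPerm (n : ℕ) (s : List ℕ) : Prop := s.Perm (List.range' 1 n)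

section IsPerm

variable {n v : ℕ} {s t : List ℕ}

lemma isPerm_iff : IsPerm n s ↔ s.Nodup ∧ ∀ x, x ∈ s ↔ 1 ≤ x ∧ x ≤ n := by
  have hrange : ∀ x, x ∈ List.range' 1 n ↔ 1 ≤ x ∧ x ≤ n := fun x => by
    rw [List.mem_range'_1]; omega
  refine ⟨fun h => ⟨h.nodup_iff.2 List.nodup_range', fun x => h.mem_iff.trans (hrange x)⟩,
    fun ⟨hs, hmem⟩ => ?_⟩
  exact (List.perm_ext_iff_of_nodup hs List.nodup_range').2 fun x => (hmem x).trans (hrange x).symm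

lemma IsPerm.nodup (hs : IsPerm n s) : s.Nodup := (isPerm_iff.1 hs).1

lemma IsPerm.mem_iff (hs : IsPerm n s) {x : ℕ} : x ∈ s ↔ 1 ≤ x ∧ x ≤ n := (isPerm_iff.1 hs).2 x

lemma IsPerm.length_eq (hs : IsPerm n s) : s.length = n := by
  simpa using List.Perm.length_eq hs

lemma IsPerm.deleteVal (hs : IsPerm n s) (hv : v ∈ s) : IsPerm (n - 1) (deleteVal s v) := by
  have hvn := hs.mem_iff.1 hv
  refine isPerm_iff.2 ⟨nodup_deleteVal hs.nodup, fun w => ?_⟩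
  rw [mem_deleteVal hs.nodup]
  constructor
  · rintro ⟨x, hx, hxv, rfl⟩
    have := hs.mem_iff.1 hx
    unfold shiftDown; split_ifs <;> omega
  · intro hw
    refine ⟨shiftUp v w, hs.mem_iff.2 ?_, ?_, ?_⟩ <;> simp only [shiftUp, shiftDown] <;>
      split_ifs <;> omega

lemma IsPerm.countP_le (hs : IsPerm n s) {x : ℕ} (hx : x ≤ n) : s.countP (· ≤ x) = x := by
  rw [hs.countP_eq (fun y => decide (y ≤ x)), List.countP_le_range'_one]
  omega

lemma IsPerm.eq_of_lt_iff (hs : IsPerm n s) (ht : IsPerm n t)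
    (h : ∀ i j, i < n → j < n → (s.getD i 0 < s.getD j 0 ↔ t.getD i 0 < t.getD j 0)) :
    s = t := by
  have hsl := hs.length_eq
  have htl := ht.length_eq
  refine List.ext_getElem (hsl.trans htl.symm) fun i his hit => ?_
  have hsi : s[i] ≤ n := (hs.mem_iff.1 (List.getElem_mem his)).2
  have hti : t[i] ≤ n := (ht.mem_iff.1 (List.getElem_mem hit)).2
  rw [← List.getD_eq_getElem s 0 his, ← List.getD_eq_getElem t 0 hit] at *
  -- the entry at position `i` is the number of entries not exceeding it
  rw [← hs.countP_le hsi, ← ht.countP_le hti, List.countP_eq_countP_range s 0,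
    List.countP_eq_countP_range t 0, hsl, htl]
  refine List.countP_congr fun j hj => ?_
  simp only [decide_eq_true_eq, ← not_lt]
  exact not_congr (h i j (by omega) (List.mem_range.1 hj))

end IsPerm

def deck (s : List ℕ) : List (List ℕ) := s.map (deleteVal s)

lemma mem_deck {s ρ : List ℕ} : ρ ∈ deck s ↔ ∃ v ∈ s, deleteVal s v = ρ := List.mem_map

lemma getD_deleteVal_lt_iff {s : List ℕ} {v i j : ℕ} (hs : s.Nodup) (hi : i < (s.erase v).length)
    (hj : j < (s.erase v).length) :
    (deleteVal s v).getD i 0 < (deleteVal s v).getD j 0 ↔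
      (s.erase v).getD i 0 < (s.erase v).getD j 0 := by
  have hne : ∀ k (hk : k < (s.erase v).length), (s.erase v)[k] ≠ v := fun k hk =>
    (hs.mem_erase_iff.1 (List.getElem_mem hk)).1
  simp only [deleteVal, List.getD_eq_getElem _ _ hi, List.getD_eq_getElem _ _ hj,
    List.getD_eq_getElem _ _ (by simpa using hi : i < ((s.erase v).map (shiftDown v)).length),
    List.getD_eq_getElem _ _ (by simpa using hj : j < ((s.erase v).map (shiftDown v)).length),
    List.getElem_map]
  exact shiftDown_lt_shiftDown_iff (hne i hi) (hne j hj)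

lemma mem_shadow_iff {σ ρ : Permu} : ρ ∈ shadow σ ↔ ρ.val ∈ deck σ.val := by
  obtain ⟨s, -, hs⟩ := σ
  obtain ⟨r, -, hr⟩ := ρ
  change IsPerm s.length s at hs
  change IsPerm r.length r at hr
  simp only [shadow, Contains, Set.mem_ofPred_eq, mem_deck]
  constructor
  · rintro ⟨hlen, u, hu, hulen, hiso⟩
    obtain ⟨v, hv, rfl⟩ := List.exists_eq_erase_of_sublist hu hs.nodup (by omega)
    have hlen' : s.length - 1 = r.length := by omega
    refine ⟨v, hv, (hs.deleteVal hv).eq_of_lt_iff (hlen' ▸ hr) fun i j hi hj => ?_⟩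
    rw [getD_deleteVal_lt_iff hs.nodup (by omega) (by omega), hiso i j (by omega) (by omega)]
  · rintro ⟨v, hv, rfl⟩
    refine ⟨by rw [length_deleteVal hv]; have := hs.mem_iff.1 hv; omega,
      s.erase v, List.erase_sublist, by rw [deleteVal, List.length_map], fun i j hi hj => ?_⟩
    exact (getD_deleteVal_lt_iff hs.nodup hi hj).symm

lemma exists_deleteVal_mem_shadow (σ : Permu) {v : ℕ} (hv : v ∈ σ.val) (hσ : 2 ≤ σ.val.length) :
    ∃ ρ ∈ shadow σ, ρ.val = deleteVal σ.val v := by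
  have hcard : IsPerm (σ.val.length - 1) (deleteVal σ.val v) := IsPerm.deleteVal σ.2.2 hv
  have hlen : (deleteVal σ.val v).length = σ.val.length - 1 := length_deleteVal hv
  refine ⟨⟨deleteVal σ.val v, ?_, hlen ▸ hcard⟩, mem_shadow_iff.2 (mem_deck.2 ⟨v, hv, rfl⟩), rfl⟩
  rw [← List.length_pos_iff]
  omega

lemma mem_deck_of_shadow_eq {σ τ : Permu} (h : shadow σ = shadow τ) {ρ : List ℕ}
    (hρ : ρ ∈ deck σ.val) : ρ ∈ deck τ.val := by
  obtain ⟨v, hv, rfl⟩ := mem_deck.1 hρ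
  obtain ⟨w, hw⟩ := List.exists_mem_of_ne_nil _ τ.2.1
  have hσ : 0 < σ.val.length := List.length_pos_of_mem hv
  rcases Nat.lt_or_ge 1 σ.val.length with hσ2 | hσ1
  · obtain ⟨ρ, hρ, hρv⟩ := exists_deleteVal_mem_shadow σ hv hσ2
    rw [h] at hρ
    exact hρv ▸ mem_shadow_iff.1 hρ
  · -- the only card of a permutation of length one is `[]`, which is not a permutation
    have hτ : τ.val.length = 1 := by
      by_contra hτ
      obtain ⟨ρ, hρ, -⟩ := exists_deleteVal_mem_shadow τ hw (by
        have := List.length_pos_of_mem hw; omega)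
      rw [← h] at hρ
      exact ρ.2.1 (List.length_eq_zero_iff.1 (by have := hρ.1; omega))
    have hσv : deleteVal σ.val v = [] := List.length_eq_zero_iff.1 (by
      rw [length_deleteVal hv]; omega)
    have hτw : deleteVal τ.val w = [] := List.length_eq_zero_iff.1 (by
      rw [length_deleteVal hw]; omega)
    exact mem_deck.2 ⟨w, hw, hτw.trans hσv.symm⟩

def SameDeck (s t : List ℕ) : Prop := deck s ⊆ deck t ∧ deck t ⊆ deck s

instance (s t : List ℕ) : Decidable (SameDeck s t) := by unfold SameDeck; infer_instance

lemma SameDeck.refl (s : List ℕ) : SameDeck s s := ⟨List.Subset.refl _, List.Subset.refl _⟩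

lemma SameDeck.symm {s t : List ℕ} (h : SameDeck s t) : SameDeck t s := ⟨h.2, h.1⟩

lemma SameDeck.length_eq {s t : List ℕ} (h : SameDeck s t) (hs : s ≠ []) :
    s.length = t.length := by
  obtain ⟨a, ha⟩ := List.exists_mem_of_ne_nil s hs
  obtain ⟨b, hb, hab⟩ := mem_deck.1 (h.1 (mem_deck.2 ⟨a, ha, rfl⟩))
  have := congrArg List.length hab
  rw [length_deleteVal hb, length_deleteVal ha] at this
  have := List.length_pos_of_mem ha
  have := List.length_pos_of_mem hb
  omega

lemma shadow_eq_iff_sameDeck {σ τ : Permu} : shadow σ = shadow τ ↔ SameDeck σ.val τ.val := by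
  refine ⟨fun h => ⟨fun _ => mem_deck_of_shadow_eq h, fun _ => mem_deck_of_shadow_eq h.symm⟩,
    fun h => Set.ext fun ρ => ?_⟩
  rw [mem_shadow_iff, mem_shadow_iff]
  exact ⟨fun hρ => h.1 hρ, fun hρ => h.2 hρ⟩

/-- Deleting the entry chosen by a coherent pick commutes with passing to decks. -/
def IsCoherentPick (pick : List ℕ → ℕ) : Prop :=
  ∀ n s, 0 < n → IsPerm n s →
    pick s ∈ s ∧ ∀ v ∈ s, v ≠ pick s → pick (deleteVal s v) = shiftDown v (pick s)

section IsCoherentPick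

variable {pick : List ℕ → ℕ} {n : ℕ} {s t : List ℕ}

lemma mem_deck_deleteVal_pick (hp : IsCoherentPick pick) (hn : 2 ≤ n) (hs : IsPerm n s)
    {ρ : List ℕ} : ρ ∈ deck (deleteVal s (pick s)) ↔ ∃ δ ∈ deck s, deleteVal δ (pick δ) = ρ := by
  obtain ⟨-, hcomm⟩ := hp n s (by omega) hs
  simp only [mem_deck]
  constructor
  · rintro ⟨w, hw, rfl⟩
    obtain ⟨v, hv, hvp, rfl⟩ := (mem_deleteVal hs.nodup).1 hw
    exact ⟨deleteVal s v, ⟨v, hv, rfl⟩, by rw [hcomm v hv hvp, deleteVal_comm hs.nodup]⟩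
  · rintro ⟨_, ⟨v, hv, rfl⟩, rfl⟩
    by_cases hvp : v = pick s
    · subst hvp
      exact ⟨_, (hp (n - 1) _ (by omega) (hs.deleteVal hv)).1, rfl⟩
    · exact ⟨shiftDown (pick s) v, (mem_deleteVal hs.nodup).2 ⟨v, hv, hvp, rfl⟩,
        by rw [hcomm v hv hvp, deleteVal_comm hs.nodup]⟩

lemma SameDeck.deleteVal_pick (h : SameDeck s t) (hp : IsCoherentPick pick) (hn : 2 ≤ n)
    (hs : IsPerm n s) (ht : IsPerm n t) :
    SameDeck (deleteVal s (pick s)) (deleteVal t (pick t)) := by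
  constructor <;> intro ρ hρ <;>
    rw [mem_deck_deleteVal_pick hp hn hs, mem_deck_deleteVal_pick hp hn ht] at * <;>
    obtain ⟨δ, hδ, rfl⟩ := hρ
  exacts [⟨δ, h.1 hδ, rfl⟩, ⟨δ, h.2 hδ, rfl⟩]

lemma isCoherentPick_length : IsCoherentPick List.length := by
  intro n s hn hs
  rw [hs.length_eq]
  refine ⟨hs.mem_iff.2 ⟨hn, le_rfl⟩, fun v hv hvn => ?_⟩
  have := hs.mem_iff.1 hv
  rw [length_deleteVal hv, hs.length_eq, shiftDown_of_gt (by omega)]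

lemma isCoherentPick_head : IsCoherentPick (·.headD 0) := by
  rintro n (_ | ⟨a, s⟩) hn hs
  · simp [hs.length_eq.symm] at hn
  refine ⟨List.mem_cons_self, fun v _ (hva : v ≠ a) => ?_⟩
  show (deleteVal (a :: s) v).headD 0 = shiftDown v a
  rw [deleteVal_cons_of_ne hva, List.headD_cons]

lemma isCoherentPick_last : IsCoherentPick (·.getLastD 0) := by
  intro n s hn hs
  obtain ⟨s, a, rfl⟩ := List.exists_eq_concat_of_ne_nil (s := s)
    (List.ne_nil_of_length_pos (hs.length_eq ▸ hn))
  simp only [List.getLastD_concat]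
  exact ⟨by simp, fun v _ hva => by rw [deleteVal_concat_of_ne hva, List.getLastD_concat]⟩

end IsCoherentPick

section ThreeCards

variable {n v : ℕ} {s t ρ : List ℕ}

lemma map_shiftDown_of_forall_lt (h : ∀ x ∈ s, x < v) : s.map (shiftDown v) = s := by
  conv_rhs => rw [← List.map_id s]
  exact List.map_congr_left fun x hx => shiftDown_of_lt (h x hx)

lemma eq_of_headD_eq (hs : s.Nodup) (ht : t.Nodup) (hs0 : s ≠ []) (ht0 : t ≠ [])
    (hh : s.headD 0 = t.headD 0) (h : deleteVal s (s.headD 0) = deleteVal t (t.headD 0)) :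
    s = t := by
  rw [hh] at h
  rw [← List.cons_headD_erase hs0, ← List.cons_headD_erase ht0, hh,
    erase_eq_of_deleteVal_eq hs ht h]

lemma eq_of_getLastD_eq (hs : s.Nodup) (ht : t.Nodup) (hs0 : s ≠ []) (ht0 : t ≠ [])
    (hl : s.getLastD 0 = t.getLastD 0)
    (h : deleteVal s (s.getLastD 0) = deleteVal t (t.getLastD 0)) : s = t := by
  rw [hl] at h
  rw [← List.concat_getLastD_erase hs hs0, ← List.concat_getLastD_erase ht ht0, hl,
    erase_eq_of_deleteVal_eq hs ht h]

lemma deleteVal_max_eq_erase (hs : IsPerm n s) : deleteVal s n = s.erase n :=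
  map_shiftDown_of_forall_lt fun x hx => by
    have := hs.mem_iff.1 (List.mem_of_mem_erase hx)
    have := (hs.nodup.mem_erase_iff.1 hx).1
    omega

lemma exists_eq_cons_eq_concat (hn : 0 < n) (hs : IsPerm n s) (ht : IsPerm n t)
    (hsn : s.headD 0 = n) (htn : t.getLastD 0 = n) (hmax : deleteVal s n = deleteVal t n) :
    ∃ ρ, IsPerm (n - 1) ρ ∧ s = n :: ρ ∧ t = ρ ++ [n] := by
  have hs0 : s ≠ [] := List.ne_nil_of_length_pos (by rw [hs.length_eq]; exact hn)
  have ht0 : t ≠ [] := List.ne_nil_of_length_pos (by rw [ht.length_eq]; exact hn)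
  have hs' := List.cons_headD_erase (d := 0) hs0
  have ht' := List.concat_getLastD_erase (d := 0) ht.nodup ht0
  rw [hsn] at hs'
  rw [htn, ← erase_eq_of_deleteVal_eq hs.nodup ht.nodup hmax] at ht'
  refine ⟨s.erase n, ?_, hs'.symm, ht'.symm⟩
  rw [← deleteVal_max_eq_erase hs]
  exact hs.deleteVal (hsn ▸ List.headD_mem hs0)

/-- Comparing the cards forces both the first and the last entry of `ρ` to be `n - 1`. -/
lemma not_cards_eq_cons_concat (hn : 3 ≤ n) (hρ : IsPerm (n - 1) ρ)
    (hhead : deleteVal (n :: ρ) ((n :: ρ).headD 0) = deleteVal (ρ ++ [n]) ((ρ ++ [n]).headD 0))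
    (hlast : deleteVal (n :: ρ) ((n :: ρ).getLastD 0) =
      deleteVal (ρ ++ [n]) ((ρ ++ [n]).getLastD 0)) : False := by
  have hlen : ρ.length = n - 1 := hρ.length_eq
  have hρ0 : ρ ≠ [] := List.ne_nil_of_length_pos (by omega)
  obtain ⟨a, r, hρa⟩ := List.exists_cons_of_ne_nil hρ0
  have hfirst : (ρ ++ [n]).headD 0 = ρ.headD 0 := by simp [hρa]
  have hfinal : (n :: ρ).getLastD 0 = ρ.getLastD 0 := by simp [hρa]
  have hlt : ∀ x ∈ ρ, x < n := fun x hx => by have := hρ.mem_iff.1 hx; omega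
  have hh := hlt _ (List.headD_mem (d := 0) hρ0)
  have hl := hlt _ (List.getLastD_mem (d := 0) hρ0)
  rw [List.headD_cons, hfirst, deleteVal_cons_self, map_shiftDown_of_forall_lt hlt,
    deleteVal_concat_of_ne hh.ne, shiftDown_of_gt hh] at hhead
  rw [hfinal, List.getLastD_concat, deleteVal_concat_self fun hn => (hlt n hn).false,
    map_shiftDown_of_forall_lt hlt, deleteVal_cons_of_ne hl.ne, shiftDown_of_gt hl] at hlast
  have hlast_eq : ρ.getLastD 0 = n - 1 := by
    rw [hhead, List.getLastD_concat]
  have hhead_eq : ρ.headD 0 = n - 1 := by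
    rw [← hlast, List.headD_cons]
  exact List.headD_ne_getLastD hρ.nodup (by omega) (hhead_eq.trans hlast_eq.symm)

lemma eq_of_cards_eq (hn : 3 ≤ n) (hs : IsPerm n s) (ht : IsPerm n t)
    (hmax : deleteVal s n = deleteVal t n)
    (hhead : deleteVal s (s.headD 0) = deleteVal t (t.headD 0))
    (hlast : deleteVal s (s.getLastD 0) = deleteVal t (t.getLastD 0)) : s = t := by
  have hs0 : s ≠ [] := List.ne_nil_of_length_pos (by rw [hs.length_eq]; omega)
  have ht0 : t ≠ [] := List.ne_nil_of_length_pos (by rw [ht.length_eq]; omega)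
  by_cases hh : s.headD 0 = t.headD 0
  · exact eq_of_headD_eq hs.nodup ht.nodup hs0 ht0 hh hhead
  by_cases hl : s.getLastD 0 = t.getLastD 0
  · exact eq_of_getLastD_eq hs.nodup ht.nodup hs0 ht0 hl hlast
  have herase := erase_eq_of_deleteVal_eq hs.nodup ht.nodup hmax
  have hs2 := List.headD_ne_getLastD (d := 0) hs.nodup (by rw [hs.length_eq]; omega)
  have ht2 := List.headD_ne_getLastD (d := 0) ht.nodup (by rw [ht.length_eq]; omega)
  exfalso
  rcases List.headD_eq_or_of_erase_eq herase hh with hsn | htn <;>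
    rcases List.getLastD_eq_or_of_erase_eq herase hl with hsn' | htn'
  · exact hs2 (hsn.trans hsn'.symm)
  · obtain ⟨ρ, hρ, rfl, rfl⟩ := exists_eq_cons_eq_concat (by omega) hs ht hsn htn' hmax
    exact not_cards_eq_cons_concat hn hρ hhead hlast
  · obtain ⟨ρ, hρ, rfl, rfl⟩ := exists_eq_cons_eq_concat (by omega) ht hs htn hsn' hmax.symm
    exact not_cards_eq_cons_concat hn hρ hhead.symm hlast.symm
  · exact ht2 (htn.trans htn'.symm)

end ThreeCards

def IsPair2413 (s t : List ℕ) : Prop :=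
  s = [2, 4, 1, 3] ∧ t = [3, 1, 4, 2] ∨ s = [3, 1, 4, 2] ∧ t = [2, 4, 1, 3]

instance (s t : List ℕ) : Decidable (IsPair2413 s t) := by unfold IsPair2413; infer_instance

lemma eq_or_isPair2413_of_sameDeck_four :
    ∀ s ∈ (List.range' 1 4).permutations', ∀ t ∈ (List.range' 1 4).permutations',
      SameDeck s t → s = t ∨ IsPair2413 s t := by
  decide

lemma eq_of_sameDeck_extensions_2413_3142 :
    ∀ a ∈ List.range' 1 5, ∀ i ∈ List.range 5, ∀ b ∈ List.range' 1 5, ∀ j ∈ List.range 5,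
      SameDeck (([2, 4, 1, 3].map (shiftUp a)).insertIdx i a)
        (([3, 1, 4, 2].map (shiftUp b)).insertIdx j b) →
      ([2, 4, 1, 3].map (shiftUp a)).insertIdx i a =
        ([3, 1, 4, 2].map (shiftUp b)).insertIdx j b := by
  decide

lemma eq_of_sameDeck_of_isPair2413 {n a b : ℕ} {s t : List ℕ} (hs : IsPerm n s) (ht : IsPerm n t)
    (ha : a ∈ s) (hb : b ∈ t) (hpair : IsPair2413 (deleteVal s a) (deleteVal t b))
    (h : SameDeck s t) : s = t := by
  wlog hpair' : deleteVal s a = [2, 4, 1, 3] ∧ deleteVal t b = [3, 1, 4, 2] generalizing s t a b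
  · have hpair'' := hpair.resolve_left hpair'
    exact (this ht hs hb ha (Or.inl hpair''.symm) h.symm hpair''.symm).symm
  have hn : n = 5 := by
    have := length_deleteVal ha
    rw [hpair'.1, hs.length_eq] at this
    simp at this
    omega
  subst hn
  have hsa : s = ([2, 4, 1, 3].map (shiftUp a)).insertIdx (s.idxOf a) a := by
    rw [← hpair'.1, map_shiftUp_deleteVal hs.nodup, List.insertIdx_erase_idxOf ha]
  have htb : t = ([3, 1, 4, 2].map (shiftUp b)).insertIdx (t.idxOf b) b := by
    rw [← hpair'.2, map_shiftUp_deleteVal ht.nodup, List.insertIdx_erase_idxOf hb]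
  have hi : s.idxOf a < 5 := hs.length_eq ▸ List.idxOf_lt_length_iff.2 ha
  have hj : t.idxOf b < 5 := ht.length_eq ▸ List.idxOf_lt_length_iff.2 hb
  have ha5 := hs.mem_iff.1 ha
  have hb5 := ht.mem_iff.1 hb
  rw [hsa, htb] at h ⊢
  exact eq_of_sameDeck_extensions_2413_3142 a (List.mem_range'_1.2 (by omega)) _
    (List.mem_range.2 hi) b (List.mem_range'_1.2 (by omega)) _ (List.mem_range.2 hj) h

theorem eq_or_isPair2413_of_sameDeck {n : ℕ} {s t : List ℕ} (hn : 4 ≤ n) (hs : IsPerm n s)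
    (ht : IsPerm n t) (h : SameDeck s t) : s = t ∨ IsPair2413 s t := by
  induction n, hn using Nat.le_induction generalizing s t with
  | base =>
    exact eq_or_isPair2413_of_sameDeck_four s (List.mem_permutations'.2 hs) t
      (List.mem_permutations'.2 ht) h
  | succ n hn ih =>
    refine Or.inl (by_contra fun hne => hne ?_)
    have hcard : ∀ pick, IsCoherentPick pick → deleteVal s (pick s) = deleteVal t (pick t) := by
      intro pick hp
      have hv := (hp _ _ (by omega) hs).1
      have hw := (hp _ _ (by omega) ht).1
      have hcards := h.deleteVal_pick hp (by omega) hs ht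
      refine (ih (hs.deleteVal hv) (ht.deleteVal hw) hcards).resolve_right fun hpair => ?_
      exact hne (eq_of_sameDeck_of_isPair2413 hs ht hv hw hpair h)
    have hmax := hcard _ isCoherentPick_length
    rw [hs.length_eq, ht.length_eq] at hmax
    exact eq_of_cards_eq (by omega) hs ht hmax (hcard _ isCoherentPick_head)
      (hcard _ isCoherentPick_last)

def ShadowTwins (s t : List ℕ) : Prop :=
  (s = [1, 2] ∧ t = [2, 1] ∨ s = [2, 1] ∧ t = [1, 2]) ∨
  (s ∈ [[1, 3, 2], [2, 1, 3], [2, 3, 1], [3, 1, 2]] ∧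
    t ∈ [[1, 3, 2], [2, 1, 3], [2, 3, 1], [3, 1, 2]]) ∨
  IsPair2413 s t ∨ s = t

instance (s t : List ℕ) : Decidable (ShadowTwins s t) := by unfold ShadowTwins; infer_instance

lemma ShadowTwins.eq_or_le_four {s t : List ℕ} (h : ShadowTwins s t) :
    s = t ∨ s.length = t.length ∧ s.length ≤ 4 := by
  rcases h with (⟨rfl, rfl⟩ | ⟨rfl, rfl⟩) | ⟨hs, ht⟩ | (⟨rfl, rfl⟩ | ⟨rfl, rfl⟩) | rfl
  all_goals try simp
  simp only [List.mem_cons, List.not_mem_nil, or_false] at hs ht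
  rcases hs with rfl | rfl | rfl | rfl <;> rcases ht with rfl | rfl | rfl | rfl <;> simp

lemma sameDeck_iff_shadowTwins_of_le_four {n : ℕ} {s t : List ℕ} (hn : n ≤ 4) (hs : IsPerm n s)
    (ht : IsPerm n t) : SameDeck s t ↔ ShadowTwins s t := by
  have key : ∀ n ∈ List.range 5, ∀ s ∈ (List.range' 1 n).permutations',
      ∀ t ∈ (List.range' 1 n).permutations', (SameDeck s t ↔ ShadowTwins s t) := by
    decide
  exact key n (List.mem_range.2 (by omega)) s (List.mem_permutations'.2 hs) t
    (List.mem_permutations'.2 ht)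

theorem sameDeck_iff_shadowTwins {s t : List ℕ} (hs : IsPermList s) (ht : IsPermList t) :
    SameDeck s t ↔ ShadowTwins s t := by
  suffices key : s.length = t.length → (SameDeck s t ↔ ShadowTwins s t) by
    refine ⟨fun h => (key (h.length_eq hs.1)).1 h, fun h => (key ?_).2 h⟩
    rcases h.eq_or_le_four with rfl | ⟨hlen, -⟩
    exacts [rfl, hlen]
  intro hlen
  have hs' : IsPerm s.length s := hs.2
  have ht' : IsPerm s.length t := hlen ▸ ht.2
  rcases le_or_gt s.length 4 with hn | hn
  · exact sameDeck_iff_shadowTwins_of_le_four hn hs' ht'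
  constructor
  · intro h
    refine Or.inr <| Or.inr <| Or.inr <|
      (eq_or_isPair2413_of_sameDeck hn.le hs' ht' h).resolve_right fun hpair => ?_
    rcases hpair with ⟨rfl, -⟩ | ⟨rfl, -⟩ <;> simp at hn
  · intro h
    rcases h.eq_or_le_four with rfl | ⟨-, h4⟩
    exacts [SameDeck.refl s, absurd h4 (by omega)]

end Shadow

theorem statement_1 (σ τ : Permu) :
    shadow σ = shadow τ ↔
      (({σ, τ} : Set Permu) = {p [1,2], p [2,1]} ∨
       ({σ, τ} : Set Permu) ⊆ {p [1,3,2], p [2,1,3], p [2,3,1], p [3,1,2]} ∨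
       ({σ, τ} : Set Permu) = {p [2,4,1,3], p [3,1,4,2]} ∨
       σ = τ) := by
  rw [Shadow.shadow_eq_iff_sameDeck, Shadow.sameDeck_iff_shadowTwins σ.2 τ.2]
  simp only [Shadow.ShadowTwins, Shadow.IsPair2413, Set.pair_eq_pair_iff, Set.insert_subset_iff,
    Set.singleton_subset_iff, Set.mem_insert_iff, Set.mem_singleton_iff, Subtype.ext_iff, p,
    List.mem_cons, List.not_mem_nil, or_false]
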